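/- Let f = h + conj(g) ∈ Ľ_H^α. Then for all z ∈ Δ, |g(z)| ≤ ((1-α)/(1+α))² · log((1 + α|z|)/(1 - |z|)) + |z|/(1 - |z|)² - ((1-α)/(1+α)) · 2|z|/(1 - |z|). -/

import Mathlib

/-!
The dilatation `ω = g' / h'` maps the disc into itself with `|ω 0| = α`, so by Schwarz–Pick
`|ω w| ≤ (α + |w|) / (1 + α |w|)`. For starlike `h`, the maps `w ↦ h⁻¹ (t h w)`, `0 ≤ t ≤ 1`,
are Schwarz self-maps of the disc; differentiating at `t = 1` gives `Re (z h' / h) ≥ 0`.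
Carathéodory's bound on `z h' / h` together with the resulting growth bound on `h z / z`
gives `|h' w| ≤ (1 + |w|) / (1 - |w|)³`. Hence `|g' w|` is at most the derivative of the right-hand
side at `|w|`, and the mean value inequality along `[0, z]` integrates this.
-/

open Metric Set Complex Filter Topology
open scoped ComplexConjugate

theorem inner_nonneg_of_hasDerivAt_of_norm_le {F : Type*} [NormedAddCommGroup F]
    [InnerProductSpace ℝ F] {c : ℝ → F} {v : F} (hc : HasDerivAt c v 1)
    (hle : ∀ t ∈ Icc (0:ℝ) 1, ‖c t‖ ≤ ‖c 1‖) : 0 ≤ inner ℝ (c 1) v := by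
  have hmax : IsLocalMaxOn (‖c ·‖ ^ 2) (Icc 0 1) 1 :=
    IsMaxOn.localize fun t ht => by
      simp only [mem_ofPred_eq]; gcongr; exact hle t ht
  have hinward : (0:ℝ) - 1 ∈ posTangentConeAt (Icc (0:ℝ) 1) 1 :=
    sub_mem_posTangentConeAt_of_segment_subset (by
      rw [segment_symm, segment_eq_Icc (zero_le_one' ℝ)])
  have := hmax.hasFDerivWithinAt_nonpos hc.norm_sq.hasFDerivAt.hasFDerivWithinAt hinward
  simpa using this

theorem hasDerivAt_invFunOn {𝕜 : Type*} [NontriviallyNormedField 𝕜] [CompleteSpace 𝕜]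
    {f : 𝕜 → 𝕜} {U : Set 𝕜} {f' : 𝕜} {u : 𝕜} (hU : IsOpen U) (hinj : InjOn f U) (hu : u ∈ U)
    (hf : HasStrictDerivAt f f' u) (hf' : f' ≠ 0) :
    HasDerivAt (Function.invFunOn f U) f'⁻¹ (f u) := by
  have hFD := hf.hasStrictFDerivAt_equiv hf'
  have hlocal : Function.invFunOn f U =ᶠ[𝓝 (f u)] hf.localInverse f f' u hf' := by
    have hmem : ∀ᶠ y in 𝓝 (f u), hf.localInverse f f' u hf' y ∈ U :=
      hFD.localInverse_continuousAt.eventually_mem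
        (by rw [hFD.localInverse_apply_image]; exact hU.mem_nhds hu)
    filter_upwards [hFD.eventually_right_inverse, hmem] with y hy hyU
    conv_lhs => rw [← hy]
    exact hinj.leftInvOn_invFunOn hyU
  exact (hf.to_localInverse hf').hasDerivAt.congr_of_eventuallyEq hlocal

theorem hasDerivAt_comp_ofReal_mul {E : Type*} [NormedAddCommGroup E] [NormedSpace ℂ E]
    {f : ℂ → E} {z : ℂ} {t : ℝ} (hf : DifferentiableAt ℂ f (t * z)) :
    HasDerivAt (fun s : ℝ => f (s * z)) (z • deriv f (t * z)) t := by
  have hpath : HasDerivAt (fun s : ℝ => (s : ℂ) * z) z t := by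
    simpa using (hasDerivAt_id t).ofReal_comp.mul_const z
  exact hf.hasDerivAt.scomp t hpath

theorem norm_le_of_norm_deriv_le {E : Type*} [NormedAddCommGroup E] [NormedSpace ℂ E]
    {f : ℂ → E} {Φ φ : ℝ → ℝ} {R : ℝ} (hf : DifferentiableOn ℂ f (ball 0 R))
    (hΦ : ∀ ρ ∈ Ico 0 R, HasDerivAt Φ (φ ρ) ρ) (hf0 : ‖f 0‖ ≤ Φ 0)
    (hbound : ∀ w ∈ ball (0:ℂ) R, ‖deriv f w‖ ≤ φ ‖w‖) {z : ℂ} (hz : z ∈ ball (0:ℂ) R) :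
    ‖f z‖ ≤ Φ ‖z‖ := by
  set r := ‖z‖
  have hnorm : ∀ t ∈ Icc (0:ℝ) 1, ‖(t:ℂ) * z‖ = t * r := fun t ht => by
    rw [norm_mul, norm_real, Real.norm_of_nonneg ht.1]
  have hmem : ∀ t ∈ Icc (0:ℝ) 1, t * r ∈ Ico 0 R := fun t ht =>
    ⟨mul_nonneg ht.1 (norm_nonneg z), by nlinarith [ht.2, norm_nonneg z, mem_ball_zero_iff.mp hz]⟩
  have hball : ∀ t ∈ Icc (0:ℝ) 1, (t:ℂ) * z ∈ ball (0:ℂ) R := fun t ht => by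
    rw [mem_ball_zero_iff, hnorm t ht]; exact (hmem t ht).2
  have hfd : ∀ t ∈ Icc (0:ℝ) 1, HasDerivAt (fun s : ℝ => f (s * z)) (z • deriv f (t * z)) t :=
    fun t ht => hasDerivAt_comp_ofReal_mul (hf.differentiableAt (isOpen_ball.mem_nhds (hball t ht)))
  have hB : ∀ t ∈ Icc (0:ℝ) 1, HasDerivAt (fun s => Φ (s * r)) (φ (t * r) * r) t :=
    fun t ht => (hΦ _ (hmem t ht)).comp t (hasDerivAt_mul_const r)
  have := image_norm_le_of_norm_deriv_right_le_deriv_boundary'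
    (fun t ht => (hfd t ht).continuousAt.continuousWithinAt)
    (fun t ht => (hfd t (Ico_subset_Icc_self ht)).hasDerivWithinAt)
    (by simpa using hf0) (fun t ht => (hB t ht).continuousAt.continuousWithinAt)
    (fun t ht => (hB t (Ico_subset_Icc_self ht)).hasDerivWithinAt)
    (fun t ht => by
      have htI := Ico_subset_Icc_self ht
      rw [norm_smul, mul_comm]
      exact mul_le_mul_of_nonneg_right (hnorm t htI ▸ hbound _ (hball t htI)) (norm_nonneg z))
    (right_mem_Icc.mpr zero_le_one)
  simpa using this

theorem normSq_one_sub_conj_mul_sub_normSq_sub (a u : ℂ) :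
    normSq (1 - conj a * u) - normSq (u - a) = (1 - normSq a) * (1 - normSq u) := by
  simp only [normSq_apply, sub_re, sub_im, mul_re, mul_im, one_re, one_im, conj_re, conj_im]
  ring

theorem norm_sub_le_norm_one_sub_conj_mul {a u : ℂ} (ha : ‖a‖ ≤ 1) (hu : ‖u‖ ≤ 1) :
    ‖u - a‖ ≤ ‖1 - conj a * u‖ := by
  have := normSq_one_sub_conj_mul_sub_normSq_sub a u
  simp only [normSq_eq_norm_sq] at this
  have : 0 ≤ (1 - ‖a‖ ^ 2) * (1 - ‖u‖ ^ 2) := mul_nonneg (by nlinarith [norm_nonneg a])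
    (by nlinarith [norm_nonneg u])
  nlinarith [norm_nonneg (u - a), norm_nonneg (1 - conj a * u)]

theorem norm_le_of_norm_sub_le_mul_norm_one_sub_conj_mul {a x : ℂ} {r : ℝ} (ha : ‖a‖ ≤ 1)
    (hx : ‖x‖ ≤ 1) (hr₀ : 0 ≤ r) (hr₁ : r ≤ 1) (h : ‖x - a‖ ≤ r * ‖1 - conj a * x‖) :
    ‖x‖ ≤ (‖a‖ + r) / (1 + ‖a‖ * r) := by
  have hid := normSq_one_sub_conj_mul_sub_normSq_sub a x
  simp only [normSq_eq_norm_sq] at hid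
  have hD : 1 - ‖a‖ * ‖x‖ ≤ ‖1 - conj a * x‖ := by
    simpa [norm_mul] using norm_sub_norm_le (1 : ℂ) (conj a * x)
  have hAX : 0 ≤ 1 - ‖a‖ * ‖x‖ := by nlinarith [norm_nonneg a, norm_nonneg x]
  -- `(‖x‖ - ‖a‖)² = (1 - ‖a‖‖x‖)² - (1 - ‖a‖²)(1 - ‖x‖²) ≤ r² (1 - ‖a‖‖x‖)²`
  have hsq : (‖x‖ - ‖a‖) ^ 2 ≤ (r * (1 - ‖a‖ * ‖x‖)) ^ 2 := by
    have h2 : ‖x - a‖ ^ 2 ≤ r ^ 2 * ‖1 - conj a * x‖ ^ 2 := by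
      rw [← mul_pow]; exact pow_le_pow_left₀ (norm_nonneg _) h 2
    nlinarith [mul_le_mul_of_nonneg_left (pow_le_pow_left₀ hAX hD 2)
      (sub_nonneg.mpr (pow_le_one₀ hr₀ hr₁ : r ^ 2 ≤ 1))]
  have := abs_le_of_sq_le_sq' hsq (by positivity)
  rw [le_div_iff₀ (by positivity)]
  nlinarith [this.2]

theorem norm_le_add_div_one_add_mul_of_mapsTo_ball {F : ℂ → ℂ}
    (hF : DifferentiableOn ℂ F (ball 0 1)) (hmaps : MapsTo F (ball 0 1) (ball 0 1))
    {z : ℂ} (hz : z ∈ ball (0:ℂ) 1) :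
    ‖F z‖ ≤ (‖F 0‖ + ‖z‖) / (1 + ‖F 0‖ * ‖z‖) := by
  set a := F 0
  have hnorm : ∀ w ∈ ball (0:ℂ) 1, ‖F w‖ < 1 := fun w hw => mem_ball_zero_iff.mp (hmaps hw)
  have ha : ‖a‖ < 1 := hnorm 0 (mem_ball_self one_pos)
  have hden : ∀ w ∈ ball (0:ℂ) 1, 1 - conj a * F w ≠ 0 := fun w hw h0 => by
    have : ‖conj a * F w‖ < 1 := by
      rw [norm_mul, norm_conj]
      nlinarith [hnorm w hw, norm_nonneg (F w), norm_nonneg a]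
    rw [← sub_eq_zero.mp h0, norm_one] at this
    exact this.false
  -- compose `F` with the Möbius automorphism sending `a = F 0` to `0`
  have hφ : MapsTo (fun w => (F w - a) / (1 - conj a * F w)) (ball 0 1) (closedBall 0 1) :=
    fun w hw => by
      rw [mem_closedBall_zero_iff, norm_div, div_le_one (norm_pos_iff.mpr (hden w hw))]
      exact norm_sub_le_norm_one_sub_conj_mul ha.le (hnorm w hw).le
  have hschwarz : ‖(F z - a) / (1 - conj a * F z)‖ ≤ ‖z‖ := Complex.norm_le_norm_of_mapsTo_ball
    ((hF.sub_const a).div ((differentiableOn_const 1).sub (hF.const_mul (conj a))) hden) hφ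
    (by simp [a]) (mem_ball_zero_iff.mp hz)
  rw [norm_div, div_le_iff₀ (norm_pos_iff.mpr (hden z hz))] at hschwarz
  exact norm_le_of_norm_sub_le_mul_norm_one_sub_conj_mul ha.le (hnorm z hz).le (norm_nonneg z)
    (mem_ball_zero_iff.mp hz).le hschwarz

theorem norm_sub_one_le_of_re_nonneg {p : ℂ → ℂ} (hp : DifferentiableOn ℂ p (ball 0 1))
    (hre : ∀ z ∈ ball (0:ℂ) 1, 0 ≤ (p z).re) (hp0 : p 0 = 1) {z : ℂ} (hz : z ∈ ball (0:ℂ) 1) :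
    ‖p z - 1‖ ≤ 2 * ‖z‖ / (1 - ‖z‖) := by
  have hz1 : ‖z‖ < 1 := mem_ball_zero_iff.mp hz
  have hne : ∀ w ∈ ball (0:ℂ) 1, p w + 1 ≠ 0 := fun w hw hw0 => by
    have := congrArg re hw0
    simp only [add_re, one_re, zero_re] at this
    linarith [hre w hw]
  -- the Cayley transform of `p` is a Schwarz self-map of the disc
  have hmaps : MapsTo (fun w => (p w - 1) / (p w + 1)) (ball 0 1) (closedBall 0 1) :=
    fun w hw => by
      have : ‖p w - 1‖ ^ 2 ≤ ‖p w + 1‖ ^ 2 := by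
        rw [← normSq_eq_norm_sq, ← normSq_eq_norm_sq, normSq_sub, normSq_add]
        simp only [map_one, mul_one]
        linarith [hre w hw]
      rw [mem_closedBall_zero_iff, norm_div, div_le_one (norm_pos_iff.mpr (hne w hw))]
      exact (pow_le_pow_iff_left₀ (norm_nonneg _) (norm_nonneg _) two_ne_zero).mp this
  have hq : ‖(p z - 1) / (p z + 1)‖ ≤ ‖z‖ := Complex.norm_le_norm_of_mapsTo_ball
    ((hp.sub_const 1).div (hp.add_const 1) hne) hmaps (by simp [hp0]) hz1
  have key : ‖p z - 1‖ ≤ ‖z‖ * (‖p z - 1‖ + 2) := calc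
    ‖p z - 1‖ = ‖(p z - 1) / (p z + 1)‖ * ‖(p z - 1) + 2‖ := by
      rw [← norm_mul]
      congr 1
      field_simp [hne z hz]
      ring
    _ ≤ ‖z‖ * (‖p z - 1‖ + 2) := by
      gcongr
      simpa using norm_add_le (p z - 1) 2
  rw [le_div_iff₀ (by linarith)]
  nlinarith

theorem norm_sq_mul_one_sub_pow_four_le {H : ℂ → ℂ} (hH : DifferentiableOn ℂ H (ball 0 1))
    (hH0 : H 0 = 1)
    (hre : ∀ w ∈ ball (0:ℂ) 1, (w * deriv H w * conj (H w)).re ≤ 2 * ‖w‖ / (1 - ‖w‖) * ‖H w‖ ^ 2)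
    {z : ℂ} (hz : z ∈ ball (0:ℂ) 1) : ‖H z‖ ^ 2 * (1 - ‖z‖) ^ 4 ≤ 1 := by
  set r := ‖z‖
  have hmem : ∀ t ∈ Icc (0:ℝ) 1, (t:ℂ) * z ∈ ball (0:ℂ) 1 := fun t ht => by
    rw [mem_ball_zero_iff, norm_mul, norm_real, Real.norm_of_nonneg ht.1]
    nlinarith [ht.2, norm_nonneg z, mem_ball_zero_iff.mp hz]
  set W := fun t : ℝ => ‖H (t * z)‖ ^ 2 * (1 - t * r) ^ 4
  have hW : ∀ t ∈ Icc (0:ℝ) 1, HasDerivAt W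
      (2 * (z * deriv H (t * z) * conj (H (t * z))).re * (1 - t * r) ^ 4
        + ‖H (t * z)‖ ^ 2 * (4 * (1 - t * r) ^ 3 * -r)) t := fun t ht => by
    have hu := (hasDerivAt_comp_ofReal_mul
      (hH.differentiableAt (isOpen_ball.mem_nhds (hmem t ht)))).norm_sq
    have hpoly : HasDerivAt (fun t : ℝ => (1 - t * r) ^ 4) (4 * (1 - t * r) ^ 3 * -r) t := by
      simpa using (((hasDerivAt_id t).mul_const r).const_sub 1).fun_pow 4
    rw [Complex.inner, smul_eq_mul] at hu
    exact hu.mul hpoly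
  have hW' : ∀ t ∈ Ioo (0:ℝ) 1, deriv W t ≤ 0 := fun t ht => by
    have htI : t ∈ Icc (0:ℝ) 1 := Ioo_subset_Icc_self ht
    rw [(hW t htI).deriv]
    have htr : 0 < 1 - t * r := by nlinarith [ht.2, norm_nonneg z, mem_ball_zero_iff.mp hz]
    have hbound := hre _ (hmem t htI)
    rw [norm_mul, norm_real, Real.norm_of_nonneg ht.1.le] at hbound
    simp only [mul_assoc, re_ofReal_mul] at hbound
    rw [div_mul_eq_mul_div, le_div_iff₀ htr] at hbound
    have hX : (z * deriv H (t * z) * conj (H (t * z))).re * (1 - t * r)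
        ≤ 2 * r * ‖H (t * z)‖ ^ 2 :=
      le_of_mul_le_mul_left (by simp only [mul_assoc] at hbound ⊢; linarith) ht.1
    nlinarith [mul_le_mul_of_nonneg_right hX (pow_nonneg htr.le 3)]
  have hanti : AntitoneOn W (Icc 0 1) := by
    apply antitoneOn_of_deriv_nonpos (convex_Icc 0 1)
      (fun t ht => (hW t ht).continuousAt.continuousWithinAt)
    · rw [interior_Icc]
      exact fun t ht => (hW t (Ioo_subset_Icc_self ht)).differentiableAt.differentiableWithinAt
    · rwa [interior_Icc]
  simpa [W, hH0] using hanti (left_mem_Icc.mpr zero_le_one) (right_mem_Icc.mpr zero_le_one) zero_le_one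

theorem hasDerivAt_invFunOn_ball {h : ℂ → ℂ} (hd : DifferentiableOn ℂ h (ball 0 1))
    (hinj : InjOn h (ball 0 1)) (hps : ∀ z ∈ ball (0:ℂ) 1, deriv h z ≠ 0)
    {u : ℂ} (hu : u ∈ ball (0:ℂ) 1) :
    HasDerivAt (Function.invFunOn h (ball 0 1)) (deriv h u)⁻¹ (h u) :=
  hasDerivAt_invFunOn isOpen_ball hinj hu
    (hd.analyticAt (isOpen_ball.mem_nhds hu)).hasStrictDerivAt (hps u hu)

theorem norm_invFunOn_mul_le_of_starConvex {h : ℂ → ℂ} (hd : DifferentiableOn ℂ h (ball 0 1))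
    (hinj : InjOn h (ball 0 1)) (hps : ∀ z ∈ ball (0:ℂ) 1, deriv h z ≠ 0) (h0 : h 0 = 0)
    (hstar : StarConvex ℝ 0 (h '' ball 0 1)) {t : ℝ} (ht : t ∈ Icc (0:ℝ) 1)
    {z : ℂ} (hz : z ∈ ball (0:ℂ) 1) :
    ‖Function.invFunOn h (ball 0 1) (t * h z)‖ ≤ ‖z‖ := by
  set ψ := fun w => Function.invFunOn h (ball 0 1) (t * h w)
  have himage : ∀ w ∈ ball (0:ℂ) 1, ∃ u ∈ ball (0:ℂ) 1, h u = t * h w := fun w hw => by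
    simpa [Complex.real_smul] using hstar.smul_mem (mem_image_of_mem h hw) ht.1 ht.2
  have hψd : DifferentiableOn ℂ ψ (ball 0 1) := fun w hw => by
    obtain ⟨u, hu, hhu⟩ := himage w hw
    have hinv := hasDerivAt_invFunOn_ball hd hinj hps hu
    rw [hhu] at hinv
    exact (hinv.differentiableAt.comp w
      ((hd.differentiableAt (isOpen_ball.mem_nhds hw)).const_mul _)).differentiableWithinAt
  have hψ0 : ψ 0 = 0 := by
    simp only [ψ, h0, mul_zero]
    simpa only [h0] using hinj.leftInvOn_invFunOn (mem_ball_self one_pos)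
  have hmaps : MapsTo ψ (ball 0 1) (closedBall 0 1) := fun w hw =>
    ball_subset_closedBall (Function.invFunOn_mem (himage w hw))
  exact Complex.norm_le_norm_of_mapsTo_ball hψd hmaps hψ0 (mem_ball_zero_iff.mp hz)

theorem re_conj_mul_div_deriv_nonneg_of_starConvex {h : ℂ → ℂ}
    (hd : DifferentiableOn ℂ h (ball 0 1)) (hinj : InjOn h (ball 0 1))
    (hps : ∀ z ∈ ball (0:ℂ) 1, deriv h z ≠ 0) (h0 : h 0 = 0)
    (hstar : StarConvex ℝ 0 (h '' ball 0 1)) {z : ℂ} (hz : z ∈ ball (0:ℂ) 1) :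
    0 ≤ (conj z * (h z / deriv h z)).re := by
  set c := fun t : ℝ => Function.invFunOn h (ball 0 1) (t * h z)
  have hc1 : c 1 = z := by simpa [c] using hinj.leftInvOn_invFunOn hz
  have hc : HasDerivAt c (h z / deriv h z) 1 := by
    have hinv := hasDerivAt_invFunOn_ball hd hinj hps hz
    rw [← one_mul (h z)] at hinv
    have := (hinv.comp (1:ℂ) (hasDerivAt_mul_const (h z))).comp_ofReal
    simpa [c, div_eq_mul_inv, mul_comm] using this
  have := inner_nonneg_of_hasDerivAt_of_norm_le hc fun t ht => by
    rw [hc1]; exact norm_invFunOn_mul_le_of_starConvex hd hinj hps h0 hstar ht hz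
  rwa [hc1, Complex.inner, mul_comm] at this

theorem dslope_ne_zero_of_injOn {h : ℂ → ℂ} (hinj : InjOn h (ball 0 1)) (h0 : h 0 = 0)
    (hd0 : deriv h 0 ≠ 0) {z : ℂ} (hz : z ∈ ball (0:ℂ) 1) : dslope h 0 z ≠ 0 := by
  rcases eq_or_ne z 0 with rfl | hz0
  · rwa [dslope_same]
  · rw [dslope_of_ne _ hz0, slope_def_module, h0, sub_zero, sub_zero, smul_ne_zero_iff]
    exact ⟨inv_ne_zero hz0, fun hhz => hz0 (hinj hz (mem_ball_self one_pos) (hhz.trans h0.symm))⟩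

theorem re_deriv_div_dslope_nonneg_of_starConvex {h : ℂ → ℂ}
    (hd : DifferentiableOn ℂ h (ball 0 1)) (hinj : InjOn h (ball 0 1))
    (hps : ∀ z ∈ ball (0:ℂ) 1, deriv h z ≠ 0) (h0 : h 0 = 0)
    (hstar : StarConvex ℝ 0 (h '' ball 0 1)) {z : ℂ} (hz : z ∈ ball (0:ℂ) 1) :
    0 ≤ (deriv h z / dslope h 0 z).re := by
  rcases eq_or_ne z 0 with rfl | hz0
  · rw [dslope_same, div_self (hps 0 hz)]; simp
  have hH := dslope_ne_zero_of_injOn hinj h0 (hps 0 (mem_ball_self one_pos)) hz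
  have key := re_conj_mul_div_deriv_nonneg_of_starConvex hd hinj hps h0 hstar hz
  -- `conj z * h z / h' z = |z|² / p` with `p = h' / dslope h 0`
  have hzH : h z = z * dslope h 0 z := by
    simpa [h0] using (sub_smul_dslope h 0 z).symm
  rw [hzH, mul_div_assoc, ← mul_assoc, conj_mul', ← ofReal_pow, re_ofReal_mul,
    ← inv_div, inv_re] at key
  have hp : 0 < normSq (deriv h z / dslope h 0 z) := normSq_pos.mpr (div_ne_zero (hps z hz) hH)
  have hz2 : 0 < ‖z‖ ^ 2 := by positivity
  have := nonneg_of_mul_nonneg_right key hz2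
  rwa [le_div_iff₀ hp, zero_mul] at this

theorem norm_deriv_le_of_starConvex {h : ℂ → ℂ}
    (hd : DifferentiableOn ℂ h (ball 0 1)) (hinj : InjOn h (ball 0 1))
    (hps : ∀ z ∈ ball (0:ℂ) 1, deriv h z ≠ 0) (h0 : h 0 = 0) (h1 : deriv h 0 = 1)
    (hstar : StarConvex ℝ 0 (h '' ball 0 1)) {z : ℂ} (hz : z ∈ ball (0:ℂ) 1) :
    ‖deriv h z‖ ≤ (1 + ‖z‖) / (1 - ‖z‖) ^ 3 := by
  set H := dslope h 0
  have hH : DifferentiableOn ℂ H (ball 0 1) :=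
    (differentiableOn_dslope (isOpen_ball.mem_nhds (mem_ball_self one_pos))).mpr hd
  have hH0 : H 0 = 1 := by simp only [H, dslope_same, h1]
  have hHne : ∀ w ∈ ball (0:ℂ) 1, H w ≠ 0 :=
    fun w hw => dslope_ne_zero_of_injOn hinj h0 (hps 0 (mem_ball_self one_pos)) hw
  have hp : DifferentiableOn ℂ (fun w => deriv h w / H w) (ball 0 1) :=
    (hd.analyticOnNhd isOpen_ball).deriv.differentiableOn.div hH hHne
  have hcara : ∀ w ∈ ball (0:ℂ) 1, ‖deriv h w / H w - 1‖ ≤ 2 * ‖w‖ / (1 - ‖w‖) :=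
    fun w hw => norm_sub_one_le_of_re_nonneg hp
      (fun w hw => re_deriv_div_dslope_nonneg_of_starConvex hd hinj hps h0 hstar hw)
      (by simp [hH0, h1]) hw
  -- differentiate `h w = w * H w`
  have hlogderiv : ∀ w ∈ ball (0:ℂ) 1, w * deriv H w = (deriv h w / H w - 1) * H w := by
    intro w hw
    have hhH : h = fun w => w * H w := funext fun w => by
      simpa [h0] using (sub_smul_dslope h 0 w).symm
    have := ((hasDerivAt_id' w).fun_mul
      (hH.differentiableAt (isOpen_ball.mem_nhds hw)).hasDerivAt).deriv
    rw [← hhH] at this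
    field_simp [hHne w hw]
    rw [this]
    ring
  have hgrowth := norm_sq_mul_one_sub_pow_four_le hH hH0 (fun w hw => by
    rw [hlogderiv w hw, mul_assoc, mul_conj', ← ofReal_pow, re_mul_ofReal]
    gcongr
    exact (re_le_norm _).trans (hcara w hw)) hz
  have hr1 : 0 < 1 - ‖z‖ := sub_pos.mpr (mem_ball_zero_iff.mp hz)
  have hHz : ‖H z‖ ≤ 1 / (1 - ‖z‖) ^ 2 := by
    rw [le_div_iff₀ (by positivity)]
    exact (pow_le_one_iff_of_nonneg (by positivity) two_ne_zero).mp (by linear_combination hgrowth)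
  have hpz : ‖deriv h z / H z‖ ≤ (1 + ‖z‖) / (1 - ‖z‖) := calc
    ‖deriv h z / H z‖ ≤ ‖deriv h z / H z - 1‖ + 1 := by
      simpa only [norm_one] using norm_le_norm_sub_add (deriv h z / H z) 1
    _ ≤ 2 * ‖z‖ / (1 - ‖z‖) + 1 := by gcongr; exact hcara z hz
    _ = (1 + ‖z‖) / (1 - ‖z‖) := by field_simp; ring
  calc ‖deriv h z‖ = ‖deriv h z / H z‖ * ‖H z‖ := by rw [← norm_mul, div_mul_cancel₀ _ (hHne z hz)]
    _ ≤ (1 + ‖z‖) / (1 - ‖z‖) * (1 / (1 - ‖z‖) ^ 2) := by gcongr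
    _ = (1 + ‖z‖) / (1 - ‖z‖) ^ 3 := by field_simp

noncomputable def coanalyticBound (α ρ : ℝ) : ℝ :=
  ((1 - α) / (1 + α)) ^ 2 * Real.log ((1 + α * ρ) / (1 - ρ)) + ρ / (1 - ρ) ^ 2
    - (1 - α) / (1 + α) * (2 * ρ / (1 - ρ))

theorem hasDerivAt_coanalyticBound {α ρ : ℝ} (hα : 0 ≤ α) (hρ₀ : 0 ≤ ρ) (hρ₁ : ρ < 1) :
    HasDerivAt (coanalyticBound α) ((α + ρ) / (1 + α * ρ) * ((1 + ρ) / (1 - ρ) ^ 3)) ρ := by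
  have h1 : 1 - ρ ≠ 0 := by linarith
  have h2 : 1 + α * ρ ≠ 0 := by positivity
  have h3 : 1 + α ≠ 0 := by positivity
  have hnum : HasDerivAt (fun x => 1 + α * x) α ρ := by
    simpa using ((hasDerivAt_id ρ).const_mul α).const_add 1
  have hden : HasDerivAt (fun x : ℝ => 1 - x) (-1) ρ := (hasDerivAt_id ρ).const_sub 1
  have hlog := (hnum.fun_div hden h1).log (div_ne_zero h2 h1)
  have hfrac := (hasDerivAt_id ρ).fun_div (hden.fun_pow 2) (pow_ne_zero 2 h1)
  have hfrac' := ((hasDerivAt_id ρ).const_mul 2).fun_div hden h1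
  refine (((hlog.const_mul (((1 - α) / (1 + α)) ^ 2)).fun_add hfrac).fun_sub
    (hfrac'.const_mul ((1 - α) / (1 + α)))).congr_deriv ?_
  simp only [id]
  field_simp
  ring

theorem stmt13
    (h g : ℂ → ℂ) (α : ℝ) (hα : α ∈ Set.Ico (0:ℝ) 1)
    (hd : DifferentiableOn ℂ h (Metric.ball (0:ℂ) 1))
    (gd : DifferentiableOn ℂ g (Metric.ball (0:ℂ) 1))
    (h0 : h 0 = 0) (h1 : deriv h 0 = 1) (g0 : g 0 = 0)
    (hb1 : ‖deriv g 0‖ = α)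
    (hsp : ∀ z ∈ Metric.ball (0:ℂ) 1, ‖deriv g z‖ < ‖deriv h z‖)
    (hinj : Set.InjOn h (Metric.ball (0:ℂ) 1))
    (hstar : ∀ w ∈ h '' (Metric.ball (0:ℂ) 1), segment ℝ 0 w ⊆ h '' (Metric.ball (0:ℂ) 1))
 :
    ∀ z ∈ Metric.ball (0:ℂ) 1,
      ‖g z‖ ≤ ((1 - α) / (1 + α)) ^ 2 * Real.log ((1 + α * ‖z‖) / (1 - ‖z‖)) + 1 * ‖z‖ / (1 - ‖z‖) ^ 2 - ((1 - α) / (1 + α)) * (2 * ‖z‖ / (1 - ‖z‖)) := by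
  obtain ⟨hα0, -⟩ := hα
  have hps : ∀ z ∈ ball (0:ℂ) 1, deriv h z ≠ 0 :=
    fun z hz => norm_pos_iff.mp ((norm_nonneg _).trans_lt (hsp z hz))
  have hstarConvex : StarConvex ℝ 0 (h '' ball 0 1) :=
    starConvex_iff_segment_subset.mpr fun w hw => hstar w hw
  have hω : DifferentiableOn ℂ (fun w => deriv g w / deriv h w) (ball 0 1) :=
    (gd.analyticOnNhd isOpen_ball).deriv.differentiableOn.div
      (hd.analyticOnNhd isOpen_ball).deriv.differentiableOn hps
  have hωmaps : MapsTo (fun w => deriv g w / deriv h w) (ball 0 1) (ball 0 1) := fun w hw => by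
    rw [mem_ball_zero_iff, norm_div, div_lt_one (norm_pos_iff.mpr (hps w hw))]
    exact hsp w hw
  have hbound : ∀ w ∈ ball (0:ℂ) 1,
      ‖deriv g w‖ ≤ (α + ‖w‖) / (1 + α * ‖w‖) * ((1 + ‖w‖) / (1 - ‖w‖) ^ 3) := by
    intro w hw
    have hpick := norm_le_add_div_one_add_mul_of_mapsTo_ball hω hωmaps hw
    rw [h1, div_one, hb1] at hpick
    calc ‖deriv g w‖ = ‖deriv g w / deriv h w‖ * ‖deriv h w‖ := by
          rw [← norm_mul, div_mul_cancel₀ _ (hps w hw)]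
      _ ≤ _ := mul_le_mul hpick (norm_deriv_le_of_starConvex hd hinj hps h0 h1 hstarConvex hw)
          (norm_nonneg _) (by positivity)
  intro z hz
  rw [one_mul]
  exact norm_le_of_norm_deriv_le gd (fun ρ hρ => hasDerivAt_coanalyticBound hα0 hρ.1 hρ.2)
    (by simp [g0, coanalyticBound]) hbound hz
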